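/- Fix k ≥ 2 and define Z(q) = {a ∈ ℤ/qℤ : a is a nonzero k-th power residue and gcd(a,q) = 1}, and R_k as the product over primes p with (p−1)|k of p^{η(k,p)}. Call (q,s) a Waring pair if for every A ⊆ Z(q) with |A| > |Z(q)|/2, the s-fold sumset sA equals {a ∈ ℤ/qℤ : a ≡ s (mod gcd(R_k, q))}. If gcd(q, r) = 1 and (q, s) and (r, t) are Waring pairs, then (qr, s+t) is a Waring pair. -/

import Mathlib

open Finset

/-- `p^(tau k p)` exactly divides `k`. -/
def tau (k p : ℕ) : ℕ := k.factorization p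

def eta (k p : ℕ) : ℕ := if p = 2 ∧ 0 < tau k p then tau k p + 2 else tau k p + 1

/-- `R_k = ∏_{(p-1) ∣ k} p^(eta k p)` (all such primes satisfy `p ≤ k+1`). -/
def Rk (k : ℕ) : ℕ :=
  ∏ p ∈ (Finset.range (k + 2)).filter (fun p => p.Prime ∧ (p - 1) ∣ k), p ^ eta k p

/-- The set of `k`-th power residues mod `q` that are coprime to `q`. -/
def Zset (k q : ℕ) : Set (ZMod q) := {a | (∃ t, t ^ k = a) ∧ IsUnit a}

/-- The `s`-fold sumset of `A ⊆ ℤ/qℤ`. -/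
def sumset (q s : ℕ) (A : Set (ZMod q)) : Set (ZMod q) :=
  {x | ∃ f : Fin s → ZMod q, (∀ i, f i ∈ A) ∧ ∑ i, f i = x}

/-- `(q, s)` is a Waring pair. -/
def WaringPair (k q s : ℕ) : Prop :=
  ∀ A : Set (ZMod q), A ⊆ Zset k q → ((Zset k q).ncard : ℝ) / 2 < (A.ncard : ℝ) →
    sumset q s A =
      {a : ZMod q |
        ZMod.castHom (Nat.gcd_dvd_right (Rk k) q) (ZMod (Nat.gcd (Rk k) q)) a
          = (s : ZMod (Nat.gcd (Rk k) q))}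

/-!
Every unit `k`-th power is `1` modulo any divisor of `R_k` (Euler's theorem at odd primes,
`n ^ 2 ^ τ ≡ 1 (mod 2 ^ (τ + 2))` for odd `n` at `p = 2`), so `sA` always lies in the residue
class of `s`. Conversely, the Chinese remainder theorem turns a set `A ⊆ Z(qr)` of more than half
the size into `B ⊆ Z(q) × Z(r)` of more than half the size, and by pigeonhole `B` has a row
`A₁ × {y₀}` and a column `{x₀} × A₂` filling more than half of `Z(q)`, resp. `Z(r)`. For `(u, v)`
in the target class, `u - t x₀ ∈ sA₁` and `v - s y₀ ∈ tA₂`, and the matching sums in `B` add up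
to `(u, v)`.
-/

open Pointwise

lemma Int.two_pow_add_three_dvd_pow_two_pow_sub_one {n : ℤ} (hn : Odd n) (m : ℕ) :
    2 ^ (m + 3) ∣ n ^ 2 ^ (m + 1) - 1 := by
  induction m with
  | zero =>
    obtain ⟨j, rfl⟩ := hn
    obtain ⟨c, hc⟩ := Int.even_mul_succ_self j
    exact ⟨c, by linear_combination 4 * hc⟩
  | succ m ih =>
    have h2 : 2 ∣ n ^ 2 ^ (m + 1) + 1 := (hn.pow.add_one).two_dvd
    have hfactor : n ^ 2 ^ (m + 2) - 1 = (n ^ 2 ^ (m + 1) - 1) * (n ^ 2 ^ (m + 1) + 1) := by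
      ring
    rw [hfactor, pow_succ]
    exact mul_dvd_mul ih h2

lemma Nat.pow_modEq_one_of_dvd {n m k d : ℕ} (h : n ^ m ≡ 1 [MOD d]) (hmk : m ∣ k) :
    n ^ k ≡ 1 [MOD d] := by
  obtain ⟨c, rfl⟩ := hmk
  simpa [pow_mul] using h.pow c

lemma eta_ne_zero (k p : ℕ) : eta k p ≠ 0 := by
  unfold eta; split_ifs <;> omega

lemma pow_modEq_one_mod_prime_pow_eta {k p n : ℕ} (hp : p.Prime) (hpk : p - 1 ∣ k)
    (hn : n.Coprime (p ^ eta k p)) : n ^ k ≡ 1 [MOD p ^ eta k p] := by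
  by_cases h2 : p = 2 ∧ 0 < tau k p
  · obtain ⟨rfl, htau⟩ := h2
    obtain ⟨m, hm⟩ : ∃ m, tau k 2 = m + 1 := ⟨tau k 2 - 1, by omega⟩
    have hodd : Odd n := (hn.coprime_dvd_right (dvd_pow_self 2 (eta_ne_zero k 2))).odd_of_right
    have hsq : n ^ 2 ^ tau k 2 ≡ 1 [MOD 2 ^ eta k 2] := by
      have heta : eta k 2 = tau k 2 + 2 := if_pos ⟨rfl, htau⟩
      refine (Nat.modEq_iff_dvd.mpr ?_).symm
      rw [heta, hm]
      push_cast
      exact Int.two_pow_add_three_dvd_pow_two_pow_sub_one (by exact_mod_cast hodd) m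
    exact Nat.pow_modEq_one_of_dvd hsq (Nat.ordProj_dvd k 2)
  · have heta : eta k p = tau k p + 1 := if_neg h2
    have htot : (p ^ eta k p).totient ∣ k := by
      rw [heta, Nat.totient_prime_pow_succ hp]
      refine Nat.Coprime.mul_dvd_of_dvd_of_dvd ?_ (Nat.ordProj_dvd k p) hpk
      exact Nat.Coprime.pow_left _
        ((Nat.coprime_self_sub_right hp.one_lt.le).mpr (Nat.coprime_one_right p))
    exact Nat.pow_modEq_one_of_dvd (Nat.ModEq.pow_totient hn) htot

lemma Rk_pos (k : ℕ) : 0 < Rk k :=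
  Finset.prod_pos fun _ hp => pow_pos (Finset.mem_filter.mp hp).2.1.pos _

lemma pow_modEq_one_mod_Rk {k n : ℕ} (hn : n.Coprime (Rk k)) : n ^ k ≡ 1 [MOD Rk k] := by
  refine (Nat.modEq_iff_dvd.mpr ?_).symm
  rw [Rk, Nat.cast_prod]
  refine Finset.prod_dvd_of_coprime (fun _ hp _ hp' hne => ?_) fun p hp => ?_
  · exact Nat.isCoprime_iff_coprime.mpr
      (Nat.coprime_pow_primes _ _ (Finset.mem_filter.mp hp).2.1 (Finset.mem_filter.mp hp').2.1 hne)
  · obtain ⟨-, hpp, hpk⟩ := Finset.mem_filter.mp hp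
    exact Nat.modEq_iff_dvd.mp (pow_modEq_one_mod_prime_pow_eta hpp hpk
      (hn.coprime_dvd_right (Finset.dvd_prod_of_mem (fun p => p ^ eta k p) hp))).symm

lemma ZMod.units_pow_eq_one_of_dvd_Rk {k d : ℕ} (hd : d ∣ Rk k) (u : (ZMod d)ˣ) : u ^ k = 1 := by
  have : NeZero (Rk k) := ⟨(Rk_pos k).ne'⟩
  obtain ⟨v, rfl⟩ := ZMod.unitsMap_surjective hd u
  suffices v ^ k = 1 by rw [← map_pow, this, map_one]
  ext
  rw [Units.val_pow_eq_pow_val, Units.val_one, ← ZMod.natCast_zmod_val (v : ZMod (Rk k)),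
    ← Nat.cast_pow, ← Nat.cast_one]
  exact (ZMod.natCast_eq_natCast_iff _ _ _).mpr
    (pow_modEq_one_mod_Rk (ZMod.val_coe_unit_coprime v))

/-- `Zset k q` is `powerUnits k (ZMod q)`; the general notion is needed on `ZMod q × ZMod r`. -/
def powerUnits (k : ℕ) (M : Type*) [Monoid M] : Set M := {a | (∃ t, t ^ k = a) ∧ IsUnit a}

section powerUnits

variable {k : ℕ} {M N : Type*} [Monoid M] [Monoid N]

lemma map_mem_powerUnits {F : Type*} [FunLike F M N] [MonoidHomClass F M N] (f : F) {a : M}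
    (ha : a ∈ powerUnits k M) : f a ∈ powerUnits k N := by
  obtain ⟨⟨c, rfl⟩, hu⟩ := ha
  exact ⟨⟨f c, (map_pow f c k).symm⟩, hu.map f⟩

lemma MulEquiv.image_powerUnits (e : M ≃* N) : e '' powerUnits k M = powerUnits k N := by
  refine Set.Subset.antisymm (Set.image_subset_iff.mpr fun _ ha => map_mem_powerUnits e ha)
    fun b hb => ?_
  exact ⟨e.symm b, map_mem_powerUnits e.symm hb, e.apply_symm_apply b⟩

lemma powerUnits_prod : powerUnits k (M × N) = powerUnits k M ×ˢ powerUnits k N := by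
  ext ⟨a, b⟩
  simp only [powerUnits, Set.mem_ofPred_eq, Set.mem_prod, Prod.isUnit_iff, Prod.exists,
    Prod.pow_mk, Prod.mk.injEq]
  tauto

lemma powerUnits_finite [Finite Mˣ] : (powerUnits k M).Finite :=
  (Set.finite_range ((↑) : Mˣ → M)).subset fun _ ha => ha.2

lemma eq_one_of_mem_powerUnits (h : ∀ u : Mˣ, u ^ k = 1) {a : M} (ha : a ∈ powerUnits k M) :
    a = 1 := by
  obtain ⟨⟨c, rfl⟩, hu⟩ := ha
  rcases eq_or_ne k 0 with rfl | hk
  · exact pow_zero c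
  obtain ⟨v, rfl⟩ := (isUnit_pow_iff hk).mp hu
  rw [← Units.val_pow_eq_pow_val, h, Units.val_one]

end powerUnits

lemma image_Zset_chineseRemainder {q r : ℕ} (hqr : q.Coprime r) (k : ℕ) :
    ZMod.chineseRemainder hqr '' Zset k (q * r) = Zset k q ×ˢ Zset k r :=
  (ZMod.chineseRemainder hqr).toMulEquiv.image_powerUnits.trans powerUnits_prod

lemma ncard_Zset_mul {q r : ℕ} (hqr : q.Coprime r) (k : ℕ) :
    (Zset k (q * r)).ncard = (Zset k q).ncard * (Zset k r).ncard := by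
  rw [← Set.ncard_prod, ← image_Zset_chineseRemainder hqr,
    Set.ncard_image_of_injective _ (ZMod.chineseRemainder hqr).injective]

lemma Zset_finite (k q : ℕ) : (Zset k q).Finite := powerUnits_finite

lemma sumset_eq_nsmul (q s : ℕ) (A : Set (ZMod q)) : sumset q s A = s • A :=
  Set.ext fun _ => Set.mem_nsmul_iff_sum.symm

/-- `WaringPair k q s` asks `sumset q s A` to be `residueClass k q s`. -/
def residueClass (k q n : ℕ) : Set (ZMod q) :=
  {a | ZMod.castHom (Nat.gcd_dvd_right (Rk k) q) (ZMod (Nat.gcd (Rk k) q)) a = n}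

lemma castHom_gcd_Rk_eq_one {k m : ℕ} {a : ZMod m} (ha : a ∈ Zset k m) :
    ZMod.castHom (Nat.gcd_dvd_right (Rk k) m) (ZMod (Nat.gcd (Rk k) m)) a = 1 :=
  eq_one_of_mem_powerUnits (ZMod.units_pow_eq_one_of_dvd_Rk (Nat.gcd_dvd_left _ _))
    (map_mem_powerUnits _ ha)

lemma nsmul_subset_residueClass {k q : ℕ} {A : Set (ZMod q)} (hA : A ⊆ Zset k q) (n : ℕ) :
    n • A ⊆ residueClass k q n := by
  intro x hx
  obtain ⟨f, hf, rfl⟩ := Set.mem_nsmul_iff_sum.mp hx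
  simp only [residueClass, Set.mem_ofPred_eq, map_sum, castHom_gcd_Rk_eq_one (hA (hf _))]
  simp

lemma map_mem_residueClass {k m q n : ℕ} (f : ZMod m →+* ZMod q) (hqm : Nat.gcd (Rk k) q ∣ m)
    {a : ZMod m} (ha : a ∈ residueClass k m n) : f a ∈ residueClass k q n := by
  have hdvd : Nat.gcd (Rk k) q ∣ Nat.gcd (Rk k) m := Nat.dvd_gcd (Nat.gcd_dvd_left _ _) hqm
  have hcomp := RingHom.ext_zmod
    ((ZMod.castHom (Nat.gcd_dvd_right (Rk k) q) (ZMod (Nat.gcd (Rk k) q))).comp f)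
    ((ZMod.castHom hdvd (ZMod (Nat.gcd (Rk k) q))).comp
      (ZMod.castHom (Nat.gcd_dvd_right (Rk k) m) (ZMod (Nat.gcd (Rk k) m))))
  simp only [residueClass, Set.mem_ofPred_eq] at ha ⊢
  rw [← RingHom.comp_apply, hcomp, RingHom.comp_apply, ha, map_natCast]

lemma sub_nsmul_mem_residueClass {k q s t : ℕ} {a x : ZMod q} (ha : a ∈ residueClass k q (s + t))
    (hx : x ∈ Zset k q) : a - t • x ∈ residueClass k q s := by
  simp only [residueClass, Set.mem_ofPred_eq] at ha ⊢
  rw [map_sub, map_nsmul, ha, castHom_gcd_Rk_eq_one hx]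
  simp

lemma exists_lt_ncard_fiber_snd {α β : Type*} {B : Set (α × β)} {Y : Set β} (hB : B.Finite)
    (hY : Y.Finite) (hBY : ∀ p ∈ B, p.2 ∈ Y) {c : ℝ} (h : Y.ncard * c < B.ncard) :
    ∃ y ∈ Y, c < {x | (x, y) ∈ B}.ncard := by
  classical
  obtain ⟨y, hy, hlt⟩ := Finset.exists_lt_card_fiber_of_nsmul_lt_card_of_maps_to
    (s := hB.toFinset) (t := hY.toFinset) (f := Prod.snd) (b := c)
    (fun p hp => hY.mem_toFinset.mpr (hBY p (hB.mem_toFinset.mp hp)))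
    (by rwa [nsmul_eq_mul, ← Set.ncard_eq_toFinset_card _ hY, ← Set.ncard_eq_toFinset_card _ hB])
  refine ⟨y, hY.mem_toFinset.mp hy, hlt.trans_eq ?_⟩
  have hfiber : {x | (x, y) ∈ B} = (·, y) ⁻¹' {p ∈ B | p.2 = y} := by ext; simp
  rw [hfiber, Set.ncard_preimage_of_injective_subset_range (fun _ _ h => congrArg Prod.fst h)
    (fun p hp => ⟨p.1, Prod.ext rfl hp.2.symm⟩), ← Set.ncard_coe_finset]
  simp

lemma exists_lt_ncard_fiber_fst {α β : Type*} {B : Set (α × β)} {X : Set α} (hB : B.Finite)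
    (hX : X.Finite) (hBX : ∀ p ∈ B, p.1 ∈ X) {c : ℝ} (h : X.ncard * c < B.ncard) :
    ∃ x ∈ X, c < {y | (x, y) ∈ B}.ncard :=
  exists_lt_ncard_fiber_snd (B := Prod.swap ⁻¹' B) (hB.preimage Prod.swap_injective.injOn) hX
    (fun _ hp => hBX _ hp)
    (by rwa [Set.ncard_preimage_of_injective_subset_range Prod.swap_injective
      fun p _ => Prod.swap_surjective p])

section nsmul

variable {M N : Type*} [AddCommMonoid M] [AddCommMonoid N] {B : Set (M × N)} {n : ℕ}

lemma mk_mem_nsmul_of_mem_nsmul_fiber_snd {x : M} {y : N} (hx : x ∈ n • {x | (x, y) ∈ B}) :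
    (x, n • y) ∈ n • B := by
  obtain ⟨f, hf, rfl⟩ := Set.mem_nsmul_iff_sum.mp hx
  refine Set.mem_nsmul_iff_sum.mpr ⟨fun i => (f i, y), hf, ?_⟩
  ext <;> simp [Prod.fst_sum, Prod.snd_sum]

lemma mk_mem_nsmul_of_mem_nsmul_fiber_fst {x : M} {y : N} (hy : y ∈ n • {y | (x, y) ∈ B}) :
    (n • x, y) ∈ n • B := by
  obtain ⟨f, hf, rfl⟩ := Set.mem_nsmul_iff_sum.mp hy
  refine Set.mem_nsmul_iff_sum.mpr ⟨fun i => (x, f i), hf, ?_⟩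
  ext <;> simp [Prod.fst_sum, Prod.snd_sum]

end nsmul

lemma mk_mem_nsmul_of_waringPair {k q r s t : ℕ} (h1 : WaringPair k q s) (h2 : WaringPair k r t)
    {B : Set (ZMod q × ZMod r)} (hB : B ⊆ Zset k q ×ˢ Zset k r)
    (hcard : ((Zset k q).ncard * (Zset k r).ncard : ℝ) / 2 < B.ncard) {u : ZMod q} {v : ZMod r}
    (hu : u ∈ residueClass k q (s + t)) (hv : v ∈ residueClass k r (s + t)) :
    (u, v) ∈ (s + t) • B := by
  have hBfin := ((Zset_finite k q).prod (Zset_finite k r)).subset hB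
  obtain ⟨y₀, hy₀, hrow⟩ := exists_lt_ncard_fiber_snd hBfin (Zset_finite k r)
    (fun _ hp => (hB hp).2) (c := (Zset k q).ncard / 2) (by linarith)
  obtain ⟨x₀, hx₀, hcol⟩ := exists_lt_ncard_fiber_fst hBfin (Zset_finite k q)
    (fun _ hp => (hB hp).1) (c := (Zset k r).ncard / 2) (by linarith)
  have hs : u - t • x₀ ∈ s • {x | (x, y₀) ∈ B} := by
    rw [← sumset_eq_nsmul, h1 {x | (x, y₀) ∈ B} (fun _ hx => (hB hx).1) hrow]
    exact sub_nsmul_mem_residueClass hu hx₀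
  have ht : v - s • y₀ ∈ t • {y | (x₀, y) ∈ B} := by
    rw [← sumset_eq_nsmul, h2 {y | (x₀, y) ∈ B} (fun _ hy => (hB hy).2) hcol]
    exact sub_nsmul_mem_residueClass (add_comm s t ▸ hv) hy₀
  rw [add_nsmul]
  convert Set.add_mem_add (mk_mem_nsmul_of_mem_nsmul_fiber_snd hs)
    (mk_mem_nsmul_of_mem_nsmul_fiber_fst ht) using 1
  simp

theorem stmt3_general (k : ℕ) (q r s t : ℕ) (hqr : Nat.Coprime q r)
    (h1 : WaringPair k q s) (h2 : WaringPair k r t) :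
    WaringPair k (q * r) (s + t) := by
  intro A hA hAcard
  set φ := ZMod.chineseRemainder hqr
  have hB : φ '' A ⊆ Zset k q ×ˢ Zset k r :=
    image_Zset_chineseRemainder hqr k ▸ Set.image_mono hA
  have hBcard : ((Zset k q).ncard * (Zset k r).ncard : ℝ) / 2 < (φ '' A).ncard := by
    rwa [Set.ncard_image_of_injective _ φ.injective, ← Nat.cast_mul, ← ncard_Zset_mul hqr]
  ext a
  rw [sumset_eq_nsmul]
  refine ⟨fun ha => nsmul_subset_residueClass hA _ ha, fun ha => ?_⟩
  have hu := map_mem_residueClass ((RingHom.fst _ _).comp φ.toRingHom)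
    ((Nat.gcd_dvd_right _ _).trans (dvd_mul_right q r)) ha
  have hv := map_mem_residueClass ((RingHom.snd _ _).comp φ.toRingHom)
    ((Nat.gcd_dvd_right _ _).trans (dvd_mul_left r q)) ha
  have hφa := mk_mem_nsmul_of_waringPair h1 h2 hB hBcard hu hv
  rw [← Set.image_nsmul] at hφa
  exact φ.injective.mem_set_image.mp hφa

theorem stmt3 (k : ℕ) (hk : 2 ≤ k) (q r s t : ℕ) (hqr : Nat.Coprime q r)
    (h1 : WaringPair k q s) (h2 : WaringPair k r t) :
    WaringPair k (q * r) (s + t) :=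
  stmt3_general k q r s t hqr h1 h2
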